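/- Define ρ = p⁰q⁰ - p·q - 1, τ = ρ + 2, and the 3×3 matrix S(p,q) with entries S^{ij} = ρτ δ_{ij} - (p_i - q_i)(p_j - q_j) + ρ(p_i q_j + p_j q_i). Define Π₁ = |q⁰p - p⁰q|² Id - (q⁰p - p⁰q)⊗(q⁰p - p⁰q) and Π₂ = (p×q)⊗(p×q). Then S = Π₁ - Π₂. -/

import Mathlib

noncomputable section
open Matrix MeasureTheory

abbrev E3 := EuclideanSpace ℝ (Fin 3)

/-- the energy p⁰ = √(1+|p|²) -/
def en (p : E3) : ℝ := Real.sqrt (1 + ‖p‖^2)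

/-- the cross product p × q -/
def cross3 (p q : E3) : E3 :=
  (WithLp.equiv 2 (Fin 3 → ℝ)).symm
    ![p 1 * q 2 - p 2 * q 1, p 2 * q 0 - p 0 * q 2, p 0 * q 1 - p 1 * q 0]

/-- the relative momentum ρ(p,q) = p⁰q⁰ - p·q - 1 -/
def rel (p q : E3) : ℝ := en p * en q - (inner ℝ p q : ℝ) - 1

/-- the matrix S(p,q) -/
def Smat (p q : E3) : Matrix (Fin 3) (Fin 3) ℝ :=
  Matrix.of fun i j =>
    rel p q * (rel p q + 2) * (if i = j then 1 else 0)
      - (p i - q i) * (p j - q j) + rel p q * (p i * q j + p j * q i)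

/-! Expanding `v ⊗ v` for `v = q⁰p - p⁰q` bilinearly and using the three-dimensional identity
`(p×q)⊗(p×q) = (|p|²|q|² - (p·q)²) Id - |q|² p⊗p - |p|² q⊗q + (p·q)(p⊗q + q⊗p)`
writes `Π₁ - Π₂` as a combination of `Id`, `p⊗p`, `q⊗q` and `p⊗q + q⊗p`; its coefficients agree
with those of `S` once `(p⁰)² = 1 + |p|²` and `(q⁰)² = 1 + |q|²` are substituted. -/

theorem vecMulVec_cross_self {R : Type*} [CommRing R] (a b : Fin 3 → R) :
    vecMulVec (a ⨯₃ b) (a ⨯₃ b) =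
      ((a ⬝ᵥ a) * (b ⬝ᵥ b) - (a ⬝ᵥ b) ^ 2) • (1 : Matrix (Fin 3) (Fin 3) R)
        - (b ⬝ᵥ b) • vecMulVec a a - (a ⬝ᵥ a) • vecMulVec b b
        + (a ⬝ᵥ b) • (vecMulVec a b + vecMulVec b a) := by
  ext i j
  fin_cases i <;> fin_cases j <;>
    simp [cross_apply, vecMulVec_apply, dotProduct, Fin.sum_univ_three, one_apply] <;> ring

namespace EuclideanSpace

variable {ι : Type*} [Fintype ι]

theorem real_inner_eq_dotProduct (x y : EuclideanSpace ℝ ι) : inner ℝ x y = x.ofLp ⬝ᵥ y.ofLp := by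
  rw [inner_eq_star_dotProduct, star_trivial, dotProduct_comm]

theorem real_norm_sq_eq_dotProduct (x : EuclideanSpace ℝ ι) : ‖x‖ ^ 2 = x.ofLp ⬝ᵥ x.ofLp := by
  rw [← real_inner_self_eq_norm_sq, real_inner_eq_dotProduct]

end EuclideanSpace

open EuclideanSpace

theorem en_sq (p : E3) : en p ^ 2 = 1 + p.ofLp ⬝ᵥ p.ofLp := by
  rw [en, Real.sq_sqrt (by positivity), real_norm_sq_eq_dotProduct]

theorem ofLp_cross3 (p q : E3) : (cross3 p q).ofLp = p.ofLp ⨯₃ q.ofLp :=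
  rfl

theorem Smat_eq_vecMulVec (p q : E3) :
    Smat p q = (rel p q * (rel p q + 2)) • (1 : Matrix (Fin 3) (Fin 3) ℝ)
      - vecMulVec (p - q).ofLp (p - q).ofLp
      + rel p q • (vecMulVec p.ofLp q.ofLp + vecMulVec q.ofLp p.ofLp) := by
  ext i j
  simp only [Smat, of_apply, WithLp.ofLp_sub, Matrix.sub_apply, Matrix.add_apply, Matrix.smul_apply,
    smul_eq_mul, one_apply, vecMulVec_apply, Pi.sub_apply]
  ring

theorem S_eq_Pi1_sub_Pi2 (p q : E3) :
    Smat p q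
      = (‖en q • p - en p • q‖^2 • (1 : Matrix (Fin 3) (Fin 3) ℝ)
          - vecMulVec (en q • p - en p • q) (en q • p - en p • q))
        - vecMulVec (cross3 p q) (cross3 p q) := by
  rw [Smat_eq_vecMulVec, rel, ofLp_cross3, vecMulVec_cross_self, real_norm_sq_eq_dotProduct,
    real_inner_eq_dotProduct]
  simp only [WithLp.ofLp_sub, WithLp.ofLp_smul, sub_vecMulVec, vecMulVec_sub, smul_vecMulVec,
    vecMulVec_smul, sub_dotProduct, dotProduct_sub, smul_dotProduct, dotProduct_smul, smul_eq_mul]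
  rw [dotProduct_comm q.ofLp p.ofLp]
  have hp := en_sq p
  have hq := en_sq q
  linear_combination (norm := module)
    ((en q ^ 2 - q.ofLp ⬝ᵥ q.ofLp) * hp + hq) • (1 : Matrix (Fin 3) (Fin 3) ℝ)
      + hq • vecMulVec p.ofLp p.ofLp + hp • vecMulVec q.ofLp q.ofLp
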